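/- arXiv:2403.08202 — 2 statements merged into one kernel-verified Lean document; each statement's English description precedes it below -/
import Mathlib

section
/- Let J ≥ 1, θ_ε ≥ 0, θ₂ > 0. Define S = 1 + 4θ_ε/J + θ₂·((J+2+4θ_ε)/(J+1))², A₁ = 1/√S, and θ_z = (J − 4θ_ε)/(J + 2 + 4θ_ε) − 1/S. Then A₁/(1 + A₁² + θ_z) = (J + 2 + 4θ_ε)/(2(J+1)·√S). -/
/-- Pricing-coefficient identity `Λ₁ = A₁/(1 + A₁² + θ_z) = (J+2+4θ_ε)/(2(J+1)√S)`
for the closed-form mixed-strategy equilibrium of Proposition 4.5. -/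
theorem Lambda1_closed_form (J θε θ₂ : ℝ) (hJ : 1 ≤ J) (hθε : 0 ≤ θε) (hθ₂ : 0 < θ₂)
    (S A₁ θz : ℝ)
    (hS : S = 1 + 4 * θε / J + θ₂ * ((J + 2 + 4 * θε) / (J + 1)) ^ 2)
    (hA1 : A₁ = 1 / Real.sqrt S)
    (hθz : θz = (J - 4 * θε) / (J + 2 + 4 * θε) - 1 / S) :
    A₁ / (1 + A₁ ^ 2 + θz) = (J + 2 + 4 * θε) / (2 * (J + 1) * Real.sqrt S) := by
  have hJ0 : 0 < J := by linarith
  have hk : 0 < J + 2 + 4 * θε := by linarith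
  have hSpos : 0 < S := by
    rw [hS]
    have h1 : 0 ≤ 4 * θε / J := by positivity
    have h2 : 0 < θ₂ * ((J + 2 + 4 * θε) / (J + 1)) ^ 2 := by positivity
    linarith
  have hs : 0 < Real.sqrt S := Real.sqrt_pos.mpr hSpos
  have hsq : Real.sqrt S ^ 2 = S := Real.sq_sqrt hSpos.le
  have hA2 : A₁ ^ 2 = 1 / S := by
    rw [hA1, div_pow, one_pow, hsq]
  have hden : 1 + A₁ ^ 2 + θz = 2 * (J + 1) / (J + 2 + 4 * θε) := by
    rw [hA2, hθz]
    field_simp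
    ring
  rw [hden, hA1]
  rw [div_div_div_eq]
  rw [one_mul, mul_comm (Real.sqrt S)]
end

section
/- Under the same setup as the previous variance computation (independent Gaussians v, z, u₁, ε₁,…,ε_J, u₁₊; i₁ = α₁v + z; y₁ = i₁ + u₁; κ = (α₁²σ_v² + σ_z²)/(α₁²σ_v² + σ_z² + σ₁²); x₁ⱼ = β₁ⱼ(i₁ + εⱼ − κy₁); y₁₊ = Σⱼ x₁ⱼ + u₁₊), the following hold: (i) Cov(y₁, y₁₊) = 0; (ii) Cov(v, y₁₊) = σ_v²σ₁²α₁·(Σⱼ β₁ⱼ)/(α₁²σ_v² + σ_z² + σ₁²). -/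
/-!
Every random variable involved is a linear combination of the independent centred Gaussian
family `(ε_j, v, z, u₁, u₁₊)`, so any covariance between two of them is `∑ₖ aₖ bₖ σₖ²`.
Writing `y₁₊ = ∑ⱼ β₁ⱼ εⱼ + B (1 - κ) (α₁ v + z) - B κ u₁ + u₁₊` with `B = ∑ⱼ β₁ⱼ`, the
covariance with `y₁` is `B ((1 - κ)(α₁²σ_v² + σ_z²) - κ σ₁²)`, which vanishes because `κ` is
the regression coefficient of `α₁ v + z` on `y₁`; the covariance with `v` is
`B (1 - κ) α₁ σ_v²`.
-/

open MeasureTheory ProbabilityTheory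

namespace ProbabilityTheory

variable {Ω : Type*} [MeasurableSpace Ω] {μ : Measure Ω}

lemma HasLaw.memLp_gaussianReal {X : Ω → ℝ} {m : ℝ} {v : NNReal}
    (hX : HasLaw X (gaussianReal m v) μ) (p : NNReal) : MemLp X p μ := by
  have h := memLp_id_gaussianReal (μ := m) (v := v) p
  rw [← hX.map_eq] at h
  exact (memLp_map_measure_iff (by rw [hX.map_eq]; fun_prop) hX.aemeasurable).mp h

lemma HasLaw.variance_gaussianReal {X : Ω → ℝ} {m : ℝ} {v : NNReal}
    (hX : HasLaw X (gaussianReal m v) μ) : Var[X; μ] = v :=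
  hX.variance_eq.trans variance_id_gaussianReal

lemma covariance_fun_sum_const_mul_of_pairwise_indepFun [IsFiniteMeasure μ] {ι : Type*}
    [Fintype ι] {X : ι → Ω → ℝ} (hX : ∀ i, MemLp (X i) 2 μ)
    (hindep : Pairwise fun i j ↦ X i ⟂ᵢ[μ] X j) (a b : ι → ℝ) :
    cov[fun ω ↦ ∑ i, a i * X i ω, fun ω ↦ ∑ i, b i * X i ω; μ] =
      ∑ i, a i * b i * Var[X i; μ] := by
  classical
  rw [covariance_fun_sum_fun_sum (fun i ↦ (hX i).const_mul (a i))
    (fun i ↦ (hX i).const_mul (b i))]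
  refine Finset.sum_congr rfl fun i _ ↦ ?_
  rw [Fintype.sum_eq_single i fun j hji ↦ ?_]
  · rw [covariance_const_mul_left, covariance_const_mul_right,
      covariance_self (hX i).aemeasurable]
    ring
  · rw [covariance_const_mul_left, covariance_const_mul_right,
      (hindep hji.symm).covariance_eq_zero (hX i) (hX j)]
    ring

end ProbabilityTheory

theorem cov_y1plus_general {Ω : Type*} [MeasurableSpace Ω] (μ : Measure Ω)
    [IsProbabilityMeasure μ] (n : ℕ)
    (v z u1 u1p : Ω → ℝ) (ε : Fin n → Ω → ℝ) (α₁ : ℝ) (β : Fin n → ℝ)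
    (σv σz σ1 σe σ1p : NNReal) (hσ1 : 0 < σ1)
    (hmv : Measurable v) (hmz : Measurable z) (hmu1 : Measurable u1)
    (hmu1p : Measurable u1p) (hmε : ∀ j, Measurable (ε j))
    (hv : Measure.map v μ = gaussianReal 0 (σv ^ 2))
    (hz : Measure.map z μ = gaussianReal 0 (σz ^ 2))
    (hu1 : Measure.map u1 μ = gaussianReal 0 (σ1 ^ 2))
    (hu1p : Measure.map u1p μ = gaussianReal 0 (σ1p ^ 2))
    (hε : ∀ j, Measure.map (ε j) μ = gaussianReal 0 (σe ^ 2))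
    (hindep : iIndepFun
      (Sum.elim (fun j => ε j) ![v, z, u1, u1p]) μ)
    (κ : ℝ)
    (hκ : κ = (α₁ ^ 2 * (σv : ℝ) ^ 2 + (σz : ℝ) ^ 2) /
      (α₁ ^ 2 * (σv : ℝ) ^ 2 + (σz : ℝ) ^ 2 + (σ1 : ℝ) ^ 2))
    (y₁ y₁p : Ω → ℝ)
    (hy₁ : y₁ = fun ω => (α₁ * v ω + z ω) + u1 ω)
    (hy₁p : y₁p = fun ω =>
      (∑ j, β j * ((α₁ * v ω + z ω) + ε j ω - κ * y₁ ω)) + u1p ω) :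
    (∫ ω, (y₁ ω - ∫ ω', y₁ ω' ∂μ) * (y₁p ω - ∫ ω', y₁p ω' ∂μ) ∂μ = 0) ∧
    (∫ ω, (v ω - ∫ ω', v ω' ∂μ) * (y₁p ω - ∫ ω', y₁p ω' ∂μ) ∂μ =
      (σv : ℝ) ^ 2 * (σ1 : ℝ) ^ 2 * α₁ * (∑ j, β j) /
        (α₁ ^ 2 * (σv : ℝ) ^ 2 + (σz : ℝ) ^ 2 + (σ1 : ℝ) ^ 2)) := by
  set X := Sum.elim (fun j => ε j) ![v, z, u1, u1p]
  have hlaw : ∀ k, HasLaw (X k)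
      (gaussianReal 0 (Sum.elim (fun _ => σe ^ 2) ![σv ^ 2, σz ^ 2, σ1 ^ 2, σ1p ^ 2] k)) μ := by
    rintro (j | i)
    · exact ⟨(hmε j).aemeasurable, hε j⟩
    · fin_cases i
      exacts [⟨hmv.aemeasurable, hv⟩, ⟨hmz.aemeasurable, hz⟩, ⟨hmu1.aemeasurable, hu1⟩,
        ⟨hmu1p.aemeasurable, hu1p⟩]
  have hcov := covariance_fun_sum_const_mul_of_pairwise_indepFun
    (fun k ↦ (hlaw k).memLp_gaussianReal 2) (fun _ _ hkl ↦ hindep.indepFun hkl)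
  simp only [fun k ↦ (hlaw k).variance_gaussianReal] at hcov
  have hv_comb : v = fun ω ↦ ∑ k, Sum.elim (fun _ ↦ 0) ![1, 0, 0, 0] k * X k ω := by
    ext ω; simp [X, Fin.sum_univ_four]
  have hy₁_comb : y₁ = fun ω ↦ ∑ k, Sum.elim (fun _ ↦ 0) ![α₁, 1, 1, 0] k * X k ω := by
    ext ω; simp [X, hy₁, Fin.sum_univ_four]
  have hy₁p_comb : y₁p = fun ω ↦ ∑ k, Sum.elim β
      ![(∑ j, β j) * (1 - κ) * α₁, (∑ j, β j) * (1 - κ), -(∑ j, β j) * κ, 1] k * X k ω := by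
    ext ω
    simp [X, hy₁p, hy₁, Fin.sum_univ_four, mul_add, mul_sub, Finset.sum_add_distrib,
      Finset.sum_sub_distrib, ← Finset.sum_mul]
    ring
  have hD : (0 : ℝ) < α₁ ^ 2 * σv ^ 2 + σz ^ 2 + σ1 ^ 2 := by positivity
  refine ⟨?_, ?_⟩
  · change cov[y₁, y₁p; μ] = 0
    rw [hy₁_comb, hy₁p_comb, hcov]
    simp [Fin.sum_univ_four, hκ]
    field_simp
    ring
  · change cov[v, y₁p; μ] = _
    rw [hv_comb, hy₁p_comb, hcov]
    simp [Fin.sum_univ_four, hκ]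
    field_simp
    ring

/-- Covariances of the time-1₊ order flow in the multi-HFT Kyle model:
(i) `Cov(y₁, y₁₊) = 0`; (ii) `Cov(v, y₁₊) = σ_v² σ₁² α₁ (Σⱼ β₁ⱼ)/(α₁²σ_v² + σ_z² + σ₁²)`. -/
theorem cov_y1plus {Ω : Type*} [MeasurableSpace Ω] (μ : Measure Ω)
    [IsProbabilityMeasure μ] (n : ℕ) (hn : 1 ≤ n)
    (v z u1 u1p : Ω → ℝ) (ε : Fin n → Ω → ℝ) (α₁ : ℝ) (β : Fin n → ℝ)
    (σv σz σ1 σe σ1p : NNReal) (hσv : 0 < σv) (hσ1 : 0 < σ1)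
    (hmv : Measurable v) (hmz : Measurable z) (hmu1 : Measurable u1)
    (hmu1p : Measurable u1p) (hmε : ∀ j, Measurable (ε j))
    (hv : Measure.map v μ = gaussianReal 0 (σv ^ 2))
    (hz : Measure.map z μ = gaussianReal 0 (σz ^ 2))
    (hu1 : Measure.map u1 μ = gaussianReal 0 (σ1 ^ 2))
    (hu1p : Measure.map u1p μ = gaussianReal 0 (σ1p ^ 2))
    (hε : ∀ j, Measure.map (ε j) μ = gaussianReal 0 (σe ^ 2))
    (hindep : iIndepFun
      (Sum.elim (fun j => ε j) ![v, z, u1, u1p]) μ)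
    (κ : ℝ)
    (hκ : κ = (α₁ ^ 2 * (σv : ℝ) ^ 2 + (σz : ℝ) ^ 2) /
      (α₁ ^ 2 * (σv : ℝ) ^ 2 + (σz : ℝ) ^ 2 + (σ1 : ℝ) ^ 2))
    (y₁ y₁p : Ω → ℝ)
    (hy₁ : y₁ = fun ω => (α₁ * v ω + z ω) + u1 ω)
    (hy₁p : y₁p = fun ω =>
      (∑ j, β j * ((α₁ * v ω + z ω) + ε j ω - κ * y₁ ω)) + u1p ω) :
    (∫ ω, (y₁ ω - ∫ ω', y₁ ω' ∂μ) * (y₁p ω - ∫ ω', y₁p ω' ∂μ) ∂μ = 0) ∧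
    (∫ ω, (v ω - ∫ ω', v ω' ∂μ) * (y₁p ω - ∫ ω', y₁p ω' ∂μ) ∂μ =
      (σv : ℝ) ^ 2 * (σ1 : ℝ) ^ 2 * α₁ * (∑ j, β j) /
        (α₁ ^ 2 * (σv : ℝ) ^ 2 + (σz : ℝ) ^ 2 + (σ1 : ℝ) ^ 2)) :=
  cov_y1plus_general μ n v z u1 u1p ε α₁ β σv σz σ1 σe σ1p hσ1 hmv hmz hmu1 hmu1p hmε hv hz hu1 hu1p
    hε hindep κ hκ y₁ y₁p hy₁ hy₁p
end
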